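/- Let g : [0,∞) → [0,∞) be non-increasing and F̄_Y integrable on [0,∞). For the single-deployment problem (N_D = 1), the objective h(δ₁) = g(0) ∫₀^{δ₁} F̄_Y(t) dt + g(δ₁) ∫_{δ₁}^∞ F̄_Y(t) dt satisfies: if additionally g is differentiable and convex with g' < 0, F̄_Y > 0, and m_Y is continuous with (g(0) − g(δ))/(−g'(δ)) − m_Y(δ) changing sign from negative to positive exactly once at δ₁*, then δ₁* is the unique minimizer of h on (0,∞). -/

import Mathlib

open MeasureTheory Set

/-!
Writing `T(δ) = ∫_δ^∞ F̄`, the objective has derivative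
`h'(δ) = F̄(δ)(g(0) - g(δ)) + g'(δ) T(δ) = (-g'(δ)) F̄(δ) ψ(δ)` with
`ψ(δ) = (g(0) - g(δ))/(-g'(δ)) - m_Y(δ)`. Since `-g' F̄ > 0`, `h'` has the sign of `ψ`, so `h` is
strictly decreasing on `(0, δ₁*]` and strictly increasing on `[δ₁*, ∞)`.
-/

section TailIntegral

variable {F : ℝ → ℝ} {a x : ℝ}

theorem hasDerivAt_integral_Ioc (hF : Continuous F) (hx : a < x) :
    HasDerivAt (fun d => ∫ u in Ioc a d, F u) (F x) x := by
  have hI : HasDerivAt (fun d => ∫ u in a..d, F u) (F x) x :=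
    intervalIntegral.integral_hasDerivAt_right (hF.intervalIntegrable a x)
      hF.stronglyMeasurable.stronglyMeasurableAtFilter hF.continuousAt
  refine hI.congr_of_eventuallyEq ?_
  filter_upwards [lt_mem_nhds hx] with d hd
  exact (intervalIntegral.integral_of_le hd.le).symm

theorem hasDerivAt_integral_Ioi (hF : Continuous F) (hint : IntegrableOn F (Ioi a))
    (hx : a < x) : HasDerivAt (fun d => ∫ u in Ioi d, F u) (-F x) x := by
  refine ((hasDerivAt_integral_Ioc hF hx).const_sub (∫ u in Ioi a, F u)).congr_of_eventuallyEq ?_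
  filter_upwards [lt_mem_nhds hx] with d hd
  rw [← intervalIntegral.integral_of_le hd.le, ← intervalIntegral.integral_Ioi_sub_Ioi hint hd.le,
    sub_sub_cancel]

end TailIntegral

theorem lt_of_hasDerivAt_neg_of_hasDerivAt_pos {f f' : ℝ → ℝ} {a c : ℝ}
    (hf : ∀ x, a < x → HasDerivAt f (f' x) x)
    (hneg : ∀ x, a < x → x < c → f' x < 0) (hpos : ∀ x, c < x → 0 < f' x)
    (hac : a < c) {d : ℝ} (hd : a < d) (hdc : d ≠ c) : f c < f d := by
  have hcont : ContinuousOn f (Ioi a) := fun x hx => (hf x hx).continuousAt.continuousWithinAt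
  rcases hdc.lt_or_gt with hlt | hgt
  · have hanti : StrictAntiOn f (Ioc a c) :=
      strictAntiOn_of_hasDerivWithinAt_neg (convex_Ioc a c) (hcont.mono Ioc_subset_Ioi_self)
        (fun x hx => (hf x (interior_subset hx).1).hasDerivWithinAt)
        (fun x hx => by rw [interior_Ioc] at hx; exact hneg x hx.1 hx.2)
    exact hanti ⟨hd, hlt.le⟩ ⟨hac, le_rfl⟩ hlt
  · have hmono : StrictMonoOn f (Ici c) :=
      strictMonoOn_of_hasDerivWithinAt_pos (convex_Ici c)
        (hcont.mono fun x hx => hac.trans_le hx)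
        (fun x hx => (hf x (hac.trans_le (interior_subset hx))).hasDerivWithinAt)
        (fun x hx => by rw [interior_Ici] at hx; exact hpos x hx)
    exact hmono (mem_Ici.2 le_rfl) hgt.le hgt

/-- The objective `h(δ)` of the single-deployment problem, with `F` standing for `F̄_Y`. -/
noncomputable def deploymentCost (g F : ℝ → ℝ) (δ : ℝ) : ℝ :=
  g 0 * (∫ t in Ioc (0:ℝ) δ, F t) + g δ * ∫ t in Ioi δ, F t

theorem hasDerivAt_deploymentCost {g F : ℝ → ℝ} {g'x x : ℝ} (hg : HasDerivAt g g'x x)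
    (hF : Continuous F) (hint : IntegrableOn F (Ioi 0)) (hx : 0 < x) :
    HasDerivAt (deploymentCost g F) (F x * (g 0 - g x) + g'x * ∫ u in Ioi x, F u) x := by
  have h := ((hasDerivAt_integral_Ioc hF hx).const_mul (g 0)).add
    (hg.mul (hasDerivAt_integral_Ioi hF hint hx))
  exact h.congr_deriv (by ring)

theorem deploymentCost_deriv_eq_mul {g0 gx g'x Fx T : ℝ} (hg' : g'x ≠ 0) (hF : Fx ≠ 0) :
    Fx * (g0 - gx) + g'x * T = -g'x * Fx * ((g0 - gx) / -g'x - T / Fx) := by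
  field_simp
  ring

theorem stmt_19_general (g g' F : ℝ → ℝ)
    (hg_deriv : ∀ t, HasDerivAt g (g' t) t) (hg'_neg : ∀ t, 0 ≤ t → g' t < 0)
    (hF_pos : ∀ t, 0 < F t) (hF_cont : Continuous F)
    (hF_int : IntegrableOn F (Set.Ioi 0))
    (δ₁ : ℝ) (hδ₁ : 0 < δ₁)
    (hneg : ∀ d, 0 < d → d < δ₁ →
      (g 0 - g d) / (-(g' d)) - (∫ u in Set.Ioi d, F u) / F d < 0)
    (hpos : ∀ d, δ₁ < d →
      0 < (g 0 - g d) / (-(g' d)) - (∫ u in Set.Ioi d, F u) / F d) :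
    ∀ d, 0 < d → d ≠ δ₁ →
      g 0 * (∫ t in Set.Ioc (0:ℝ) δ₁, F t) + g δ₁ * (∫ t in Set.Ioi δ₁, F t)
        < g 0 * (∫ t in Set.Ioc (0:ℝ) d, F t) + g d * (∫ t in Set.Ioi d, F t) := by
  intro d hd hne
  have hfactor : ∀ x, 0 < x →
      F x * (g 0 - g x) + g' x * (∫ u in Ioi x, F u) = -g' x * F x *
        ((g 0 - g x) / -g' x - (∫ u in Ioi x, F u) / F x) := fun x hx =>
    deploymentCost_deriv_eq_mul (hg'_neg x hx.le).ne (hF_pos x).ne'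
  have hweight : ∀ x, 0 < x → 0 < -g' x * F x := fun x hx =>
    mul_pos (neg_pos.2 (hg'_neg x hx.le)) (hF_pos x)
  refine lt_of_hasDerivAt_neg_of_hasDerivAt_pos (f := deploymentCost g F)
    (fun x hx => hasDerivAt_deploymentCost (hg_deriv x) hF_cont hF_int hx)
    (fun x hx hxδ => ?_) (fun x hx => ?_) hδ₁ hd hne
  · rw [hfactor x hx]
    exact mul_neg_of_pos_of_neg (hweight x hx) (hneg x hx hxδ)
  · rw [hfactor x (hδ₁.trans hx)]
    exact mul_pos (hweight x (hδ₁.trans hx)) (hpos x hx)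

/-- Single-deployment problem (`N_D = 1`): if
`ψ(δ) = (g(0) - g(δ))/(-g'(δ)) - m_Y(δ)` changes sign from negative to positive exactly
once at `δ₁*`, then `δ₁*` is the unique minimizer of
`h(δ) = g(0)∫₀^δ F̄ + g(δ)∫_δ^∞ F̄` on `(0,∞)`. -/
theorem stmt_19 (g g' F : ℝ → ℝ)
    (hg_anti : AntitoneOn g (Set.Ici 0)) (hg_nonneg : ∀ t, 0 ≤ t → 0 ≤ g t)
    (hg_conv : ConvexOn ℝ (Set.Ici 0) g)
    (hg_deriv : ∀ t, HasDerivAt g (g' t) t) (hg'_neg : ∀ t, 0 ≤ t → g' t < 0)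
    (hF_pos : ∀ t, 0 < F t) (hF_cont : Continuous F)
    (hF_int : IntegrableOn F (Set.Ioi 0))
    (hm_cont : ContinuousOn (fun d => (∫ u in Set.Ioi d, F u) / F d) (Set.Ioi 0))
    (δ₁ : ℝ) (hδ₁ : 0 < δ₁)
    (hneg : ∀ d, 0 < d → d < δ₁ →
      (g 0 - g d) / (-(g' d)) - (∫ u in Set.Ioi d, F u) / F d < 0)
    (hpos : ∀ d, δ₁ < d →
      0 < (g 0 - g d) / (-(g' d)) - (∫ u in Set.Ioi d, F u) / F d) :
    ∀ d, 0 < d → d ≠ δ₁ →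
      g 0 * (∫ t in Set.Ioc (0:ℝ) δ₁, F t) + g δ₁ * (∫ t in Set.Ioi δ₁, F t)
        < g 0 * (∫ t in Set.Ioc (0:ℝ) d, F t) + g d * (∫ t in Set.Ioi d, F t) :=
  stmt_19_general g g' F hg_deriv hg'_neg hF_pos hF_cont hF_int δ₁ hδ₁ hneg hpos
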